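/- For every positive integer k, all multipliers μ^{(k)}_{i,j} with i ≠ j are nonnegative. -/

import Mathlib

noncomputable def rho : ℝ := 1 + Real.sqrt 2

noncomputable def silver (t : ℕ) : ℝ := rho ^ ((padicValNat 2 (t + 1) : ℤ) - 1) + 1

lemma two_lt_rho : (2:ℝ) < rho := by
  have : (1:ℝ) < Real.sqrt 2 := by
    rw [show (1:ℝ) = Real.sqrt 1 by simp]
    exact Real.sqrt_lt_sqrt (by norm_num) (by norm_num)
  simp [rho]; linarith

lemma rho_pos : (0:ℝ) < rho := by linarith [two_lt_rho]

lemma one_le_rho : (1:ℝ) ≤ rho := by linarith [two_lt_rho]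

lemma rho_sq : rho ^ 2 = 2 * rho + 1 := by
  have h : Real.sqrt 2 ^ 2 = 2 := Real.sq_sqrt (by norm_num)
  simp only [rho]; nlinarith [h]

lemma rho_zpow_pos (z : ℤ) : (0:ℝ) < rho ^ z := zpow_pos rho_pos z

lemma silver_pos (t : ℕ) : 0 < silver t := by
  have := rho_zpow_pos ((padicValNat 2 (t + 1) : ℤ) - 1)
  simp only [silver]; linarith

lemma one_le_rho_pow (k : ℕ) : (1:ℝ) ≤ rho ^ k := one_le_pow₀ one_le_rho

lemma padic_add_pow {K a : ℕ} (h0 : 0 < a) (h : a < 2 ^ K) :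
    padicValNat 2 (a + 2 ^ K) = padicValNat 2 a := by
  haveI : Fact (Nat.Prime 2) := ⟨Nat.prime_two⟩
  set v := padicValNat 2 a with hv
  have hdvd : 2 ^ v ∣ a := pow_padicValNat_dvd
  have hvK : v < K := by
    have hle : 2 ^ v ≤ a := Nat.le_of_dvd h0 hdvd
    have := lt_of_le_of_lt hle h
    exact (Nat.pow_lt_pow_iff_right (by norm_num)).1 this
  have hne : a + 2 ^ K ≠ 0 := by positivity
  have h1 : 2 ^ v ∣ a + 2 ^ K := hdvd.add (pow_dvd_pow 2 hvK.le)
  have h2 : ¬ 2 ^ (v + 1) ∣ a + 2 ^ K := by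
    intro hd
    have hK : (2:ℕ) ^ (v+1) ∣ 2 ^ K := pow_dvd_pow 2 hvK
    have : (2:ℕ) ^ (v+1) ∣ a := (Nat.dvd_add_right hK).1 (by rwa [Nat.add_comm a (2^K)] at hd)
    exact pow_succ_padicValNat_not_dvd h0.ne' this
  have hle : v ≤ padicValNat 2 (a + 2 ^ K) := (padicValNat_dvd_iff_le hne).1 h1
  have hlt : ¬ (v + 1 ≤ padicValNat 2 (a + 2 ^ K)) := fun hc => h2 ((padicValNat_dvd_iff_le hne).2 hc)
  omega

lemma silver_add {K t : ℕ} (h : t + 1 < 2 ^ K) : silver (t + 2 ^ K) = silver t := by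
  simp only [silver]
  rw [show t + 2 ^ K + 1 = (t + 1) + 2 ^ K by ring, padic_add_pow (Nat.succ_pos t) h]

lemma silver_two_pow (k : ℕ) : silver (2 ^ (k+1) - 1) = rho ^ k + 1 := by
  have h2 : 0 < 2 ^ (k+1) := Nat.pow_pos (by norm_num)
  simp only [silver]
  rw [show 2 ^ (k+1) - 1 + 1 = 2 ^ (k+1) by omega, padicValNat.prime_pow]
  push_cast
  rw [show ((k:ℤ) + 1 - 1) = (k:ℤ) by ring, zpow_natCast]

lemma rho_inv : rho⁻¹ = rho - 2 := by
  have h : rho * (rho - 2) = 1 := by nlinarith [rho_sq]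
  exact inv_eq_of_mul_eq_one_right h

/-- The auxiliary sequence c^{(k)} (zero-based indexing of the 2^k − 1 entries):
c^{(1)} = [2(ρ−1)],
c^{(k+1)} = [π^{(k)}, (1+1/ρ^k)(ρ^{k−1}+1), ρ c^{(k)} − (ρ−1−1/ρ^k) π^{(k)}]. -/
noncomputable def csil : ℕ → ℕ → ℝ
  | 0, _ => 0
  | 1, _ => 2 * (rho - 1)
  | (k+2), j =>
      let n := 2 ^ (k + 1) - 1
      if j < n then silver j
      else if j = n then (1 + rho ^ (-(k + 1 : ℤ))) * (rho ^ k + 1)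
      else rho * csil (k+1) (j - n - 1) - (rho - 1 - rho ^ (-(k + 1 : ℤ))) * silver (j - n - 1)

lemma csil_ge : ∀ K, ∀ j, j < 2 ^ K - 1 → silver j ≤ csil K j := by
  intro K
  induction K with
  | zero => intro j hj; simp at hj
  | succ K ih =>
    match K, ih with
    | 0, _ =>
      intro j hj
      interval_cases j
      simp only [csil, silver]
      rw [show ((padicValNat 2 (0+1) : ℤ) - 1) = -1 by simp, zpow_neg_one, rho_inv]
      linarith [one_le_rho]
    | (k+1), ih =>
      intro j hj
      have hn : 1 ≤ 2 ^ (k+1) := Nat.one_le_two_pow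
      simp only [csil]
      by_cases h1 : j < 2 ^ (k+1) - 1
      · rw [if_pos h1]
      · rw [if_neg h1]
        by_cases h2 : j = 2 ^ (k+1) - 1
        · rw [if_pos h2, h2, silver_two_pow]
          have hq := rho_zpow_pos (-(k + 1 : ℤ))
          nlinarith [one_le_rho_pow k]
        · rw [if_neg h2]
          set t := j - (2 ^ (k+1) - 1) - 1 with ht
          have hjt : j = t + 2 ^ (k+1) := by
            have : 2 ^ (k+1) ≤ j := by omega
            omega
          have htlt : t + 1 < 2 ^ (k+1) := by
            have : j < 2 ^ (k+2) - 1 := hj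
            have : j < 2 ^ (k+1) + 2 ^ (k+1) - 1 := by
              have : (2:ℕ) ^ (k+2) = 2 ^ (k+1) + 2 ^ (k+1) := by ring
              omega
            omega
          rw [hjt, silver_add htlt]
          have hIH := ih t (by omega)
          have hq := rho_zpow_pos (-(k + 1 : ℤ))
          have hs := silver_pos t
          nlinarith [two_lt_rho]

/-- The non-starred multipliers μ̄^{(k)} for the co-coercivities of h (zero-based indices in
{0, ..., 2^k − 2}; zero-based row/column r corresponds to the paper's 1-based index r + 1).
μ̄^{(1)} = [0] and μ̄^{(k+1)} = μ̄^{(k+1),rec} + μ̄^{(k+1),sparse} + μ̄^{(k+1),lr}: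
the recursion glues μ̄^{(k)} (top-left) and ρ²μ̄^{(k)} (bottom-right); the sparse correction
places ρ^k at (n, n+1), ρ² at (n+1, n+2) and (ρ − 1/ρ^k)(ρ^{k−1}+1) at (2n+1, n+1)
(1-based, n = 2^k − 1); the low-rank correction adds
(1 − ρ^k/(ρ^{k−1}+1))(c^{(k)}_j − π^{(k)}_j) to row n and (ρ^k/(ρ^{k−1}+1))(c^{(k)}_j − π^{(k)}_j)
to row n+1 for columns 1 ≤ j ≤ n, and (ρ^k/(ρ^{k−1}+1))π^{(k)}_{j−n−1} to row n,
(ρ/(ρ^{k−1}+1))π^{(k)}_{j−n−1} to row n+1, (ρ+1)c^{(k)}_{j−n−1} − (1+1/ρ^k)π^{(k)}_{j−n−1}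
to row 2n+1 for columns n+2 ≤ j ≤ 2n+1. -/
noncomputable def mubar : ℕ → ℕ → ℕ → ℝ
  | 0, _, _ => 0
  | 1, _, _ => 0
  | (k+2), i, j =>
      let n := 2 ^ (k + 1) - 1
      (if i < n ∧ j < n then mubar (k+1) i j
       else if n + 1 ≤ i ∧ n + 1 ≤ j then rho ^ 2 * mubar (k+1) (i - n - 1) (j - n - 1)
       else 0)
      + (if i = n - 1 ∧ j = n then rho ^ (k+1)
         else if i = n ∧ j = n + 1 then rho ^ 2
         else if i = 2 * n ∧ j = n then (rho - rho ^ (-(k + 1 : ℤ))) * (rho ^ k + 1)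
         else 0)
      + (if i = n - 1 ∧ j < n then (1 - rho ^ (k+1) / (rho ^ k + 1)) * (csil (k+1) j - silver j)
         else if i = n ∧ j < n then (rho ^ (k+1) / (rho ^ k + 1)) * (csil (k+1) j - silver j)
         else if i = n - 1 ∧ n + 1 ≤ j then (rho ^ (k+1) / (rho ^ k + 1)) * silver (j - n - 1)
         else if i = n ∧ n + 1 ≤ j then (rho / (rho ^ k + 1)) * silver (j - n - 1)
         else if i = 2 * n ∧ n + 1 ≤ j then
           (rho + 1) * csil (k+1) (j - n - 1) - (1 + rho ^ (-(k + 1 : ℤ))) * silver (j - n - 1)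
         else 0)

lemma lastrow : ∀ k, ∀ j, j < 2 ^ (k+1) - 1 → j ≠ 2 ^ (k+1) - 2 →
    (rho ^ (k+1) / (rho ^ k + 1) - 1) * (csil (k+1) j - silver j)
      ≤ mubar (k+1) (2 ^ (k+1) - 2) j := by
  intro k
  induction k with
  | zero => intro j hj hj'; omega
  | succ k ih =>
    intro j hj hj'
    have hn1 : 1 ≤ 2 ^ (k+1) := Nat.one_le_two_pow
    have hpow : (2:ℕ) ^ (k+2) = 2 ^ (k+1) + 2 ^ (k+1) := by ring
    simp only [mubar]
    set n : ℕ := 2 ^ (k+1) - 1 with hn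
    have hrow : 2 ^ (k+2) - 2 = 2 * n := by omega
    rw [hrow]
    -- abbreviations for real quantities
    have hQpos := rho_zpow_pos (-(k + 1 + 1 : ℤ))
    have hp := one_le_rho_pow (k+1)
    have hp' := one_le_rho_pow k
    have hr := two_lt_rho
    by_cases hjn : j < n
    · -- left region: everything vanishes and csil = silver
      rw [if_neg (by omega), if_neg (by omega), if_neg (by omega), if_neg (by omega),
        if_neg (by omega), if_neg (by omega), if_neg (by omega), if_neg (by omega),
        if_neg (by omega), if_neg (by omega)]
      have hcs : csil (k+2) j = silver j := by
        simp only [csil]; rw [if_pos (by omega : j < 2 ^ (k+1) - 1)]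
      rw [show k + 1 + 1 = k + 2 by rfl, hcs]
      simp
    · by_cases hjeq : j = n
      · -- middle column
        rw [if_neg (by omega), if_neg (by omega), if_neg (by omega), if_neg (by omega),
          if_pos (by omega), if_neg (by omega), if_neg (by omega), if_neg (by omega),
          if_neg (by omega), if_neg (by omega)]
        have hcs : csil (k+2) j = (1 + rho ^ (-(k + 1 : ℤ))) * (rho ^ k + 1) := by
          simp only [csil]; rw [if_neg (by omega), if_pos (by omega : j = 2 ^ (k+1) - 1)]
        have hsil : silver j = rho ^ k + 1 := by
          rw [hjeq, hn]; exact silver_two_pow k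
        rw [show k + 1 + 1 = k + 2 by rfl, hcs, hsil]
        set Q := rho ^ (-(k + 1 : ℤ)) with hQdef
        have hQp : 0 < Q := rho_zpow_pos _
        have hQmul : Q * rho ^ (k+1) = 1 := by
          rw [hQdef, ← zpow_natCast rho (k+1), ← zpow_add₀ (ne_of_gt rho_pos),
            show (-((k:ℤ) + 1) + ((k+1:ℕ):ℤ)) = 0 by push_cast; ring, zpow_zero]
        set A := rho ^ (k + 2) / (rho ^ (k + 1) + 1) with hA
        have hAle : A ≤ rho ^ (k + 2) := div_le_self (by positivity) (by linarith)
        have hAQ : A * Q ≤ rho := by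
          have h1 : rho ^ (k+2) * Q = rho := by
            rw [show rho ^ (k+2) = rho * rho ^ (k+1) by ring, mul_assoc,
              mul_comm (rho ^ (k+1)) Q, hQmul, mul_one]
          nlinarith
        clear_value Q A
        have h2 := mul_le_mul_of_nonneg_right hAQ
          (show (0:ℝ) ≤ rho ^ k + 1 by positivity)
        nlinarith [h2, mul_pos hQp (show (0:ℝ) < rho ^ k + 1 by positivity)]
      · -- right region
        have hjge : n + 1 ≤ j := by omega
        set t := j - n - 1 with ht
        have hjt : j = t + 2 ^ (k+1) := by omega
        have htlt : t < 2 ^ (k+1) - 1 := by omega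
        have htne : t ≠ 2 ^ (k+1) - 2 := by omega
        rw [if_neg (by omega), if_pos (by omega), if_neg (by omega), if_neg (by omega),
          if_neg (by omega), if_neg (by omega), if_neg (by omega), if_neg (by omega),
          if_neg (by omega), if_pos (by omega)]
        have h2n : 2 * n - n - 1 = 2 ^ (k+1) - 2 := by omega
        rw [h2n]
        have hcs : csil (k+2) j = rho * csil (k+1) t
            - (rho - 1 - rho ^ (-(k + 1 : ℤ))) * silver t := by
          simp only [csil]; rw [if_neg (by omega), if_neg (by omega)]
        have hsil : silver j = silver t := by
          rw [hjt]; exact silver_add (by omega)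
        rw [show k + 1 + 1 = k + 2 by rfl, hcs, hsil]
        have hIH := ih t htlt htne
        set Q := rho ^ (-(k + 1 : ℤ)) with hQdef
        have hQp : 0 < Q := rho_zpow_pos _
        have hQmul : Q * rho ^ (k+1) = 1 := by
          rw [hQdef, ← zpow_natCast rho (k+1), ← zpow_add₀ (ne_of_gt rho_pos),
            show (-((k:ℤ) + 1) + ((k+1:ℕ):ℤ)) = 0 by push_cast; ring, zpow_zero]
        set B := rho ^ (k + 1) / (rho ^ k + 1) with hB
        set A := rho ^ (k + 2) / (rho ^ (k + 1) + 1) with hA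
        set c := csil (k+1) t with hc
        set s := silver t with hs
        set M := mubar (k+1) (2 ^ (k+1) - 2) t with hM
        have hsc : s ≤ c := csil_ge (k+1) t htlt
        have hspos : 0 < s := silver_pos t
        have hAB : A ≤ rho * B := by
          rw [hA, hB, mul_div_assoc' rho _ _,
            show rho * rho ^ (k+1) = rho ^ (k+2) by ring]
          apply div_le_div_of_nonneg_left (by positivity) (by positivity)
          have hkk : rho ^ k ≤ rho ^ (k+1) := by
            calc rho ^ k = 1 * rho ^ k := (one_mul _).symm
              _ ≤ rho * rho ^ k := by nlinarith [pow_pos rho_pos k]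
              _ = rho ^ (k+1) := by ring
          linarith
        have hAle : A ≤ rho ^ (k+2) := div_le_self (by positivity) (by linarith)
        have hAQ : A * Q ≤ rho := by
          have h1 : rho ^ (k+2) * Q = rho := by
            rw [show rho ^ (k+2) = rho * rho ^ (k+1) by ring, mul_assoc,
              mul_comm (rho ^ (k+1)) Q, hQmul, mul_one]
          nlinarith
        clear_value Q B A c s M
        have hA0 : 0 ≤ A := by rw [hA]; positivity
        have hB0 : 0 ≤ B := by rw [hB]; positivity
        have hsq := rho_sq
        have expand : rho ^ 2 * M + ((rho + 1) * c - (1 + Q) * s)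
              - (A - 1) * (rho * c - (rho - 1 - Q) * s - s)
            = rho ^ 2 * (M - (B - 1) * (c - s))
              + (c - s) * (rho * (rho * B - A)) + s * (rho - A * Q)
              + (c - s) * (2 * rho + 1 - rho ^ 2) := by ring
        have e1 : rho ^ 2 * ((B - 1) * (c - s)) ≤ rho ^ 2 * M :=
          mul_le_mul_of_nonneg_left hIH (by positivity)
        have e2 : 0 ≤ (c - s) * (rho * (rho * B - A)) :=
          mul_nonneg (by linarith) (mul_nonneg (by linarith) (by linarith))
        have e3 : 0 ≤ s * (rho - A * Q) := mul_nonneg hspos.le (by linarith)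
        have e4 : (c - s) * (2 * rho + 1 - rho ^ 2) = 0 := by rw [hsq]; ring
        linarith [e1, e2, e3, e4, expand]

lemma mubar_nonneg : ∀ K, ∀ i j, i < 2 ^ K - 1 → j < 2 ^ K - 1 → i ≠ j → 0 ≤ mubar K i j := by
  intro K
  induction K with
  | zero => intro i j hi _ _; omega
  | succ K ih =>
    match K, ih with
    | 0, _ => intro i j _ _ _; simp [mubar]
    | (k+1), ih =>
      intro i j hi hj hij
      have hn1 : 1 ≤ 2 ^ (k+1) := Nat.one_le_two_pow
      have hpow : (2:ℕ) ^ (k+2) = 2 ^ (k+1) + 2 ^ (k+1) := by ring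
      have hr := two_lt_rho
      have hp' := one_le_rho_pow k
      have hp := one_le_rho_pow (k+1)
      simp only [mubar]
      set n : ℕ := 2 ^ (k+1) - 1 with hn
      have hQp : 0 < rho ^ (-(k + 1 : ℤ)) := rho_zpow_pos _
      have hQmul : rho ^ (-(k + 1 : ℤ)) * rho ^ (k+1) = 1 := by
        rw [← zpow_natCast rho (k+1), ← zpow_add₀ (ne_of_gt rho_pos),
          show (-((k:ℤ) + 1) + ((k+1:ℕ):ℤ)) = 0 by push_cast; ring, zpow_zero]
      have hQ1 : rho ^ (-(k + 1 : ℤ)) ≤ 1 := by nlinarith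
      by_cases hiltn : i < n
      · by_cases hjltn : j < n
        · by_cases hin1 : i = n - 1
          · -- hard case: row n-1, use lastrow
            rw [if_pos ⟨hiltn, hjltn⟩, if_neg (by omega), if_neg (by omega),
              if_neg (by omega), if_pos ⟨hin1, hjltn⟩]
            have hi2 : i = 2 ^ (k+1) - 2 := by omega
            have hlr := lastrow k j (by omega) (by omega)
            rw [hi2]
            linarith
          · rw [if_pos ⟨hiltn, hjltn⟩, if_neg (by omega), if_neg (by omega),
              if_neg (by omega), if_neg (by omega), if_neg (by omega),
              if_neg (by omega), if_neg (by omega), if_neg (by omega)]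
            have := ih i j (by omega) (by omega) hij
            linarith
        · by_cases hjn : j = n
          · -- column n
            rw [if_neg (by omega), if_neg (by omega)]
            by_cases hin1 : i = n - 1
            · rw [if_pos ⟨hin1, hjn⟩, if_neg (by omega), if_neg (by omega),
                if_neg (by omega), if_neg (by omega), if_neg (by omega)]
              have : (0:ℝ) ≤ rho ^ (k+1) := by positivity
              linarith
            · rw [if_neg (by omega), if_neg (by omega), if_neg (by omega),
                if_neg (by omega), if_neg (by omega), if_neg (by omega),
                if_neg (by omega), if_neg (by omega)]
              linarith
          · -- i < n, j ≥ n+1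
            have hjge : n + 1 ≤ j := by omega
            rw [if_neg (by omega), if_neg (by omega), if_neg (by omega),
              if_neg (by omega), if_neg (by omega), if_neg (by omega),
              if_neg (by omega)]
            by_cases hin1 : i = n - 1
            · rw [if_pos ⟨hin1, hjge⟩]
              have h1 : (0:ℝ) ≤ rho ^ (k+1) / (rho ^ k + 1) := by positivity
              have h2 := silver_pos (j - n - 1)
              nlinarith
            · rw [if_neg (by omega), if_neg (by omega), if_neg (by omega)]
              linarith
      · by_cases hin : i = n
        · by_cases hjltn : j < n
          · rw [if_neg (by omega), if_neg (by omega), if_neg (by omega),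
              if_neg (by omega), if_neg (by omega), if_neg (by omega),
              if_pos ⟨hin, hjltn⟩]
            have h1 : (0:ℝ) ≤ rho ^ (k+1) / (rho ^ k + 1) := by positivity
            have h2 : silver j ≤ csil (k+1) j := csil_ge (k+1) j (by omega)
            nlinarith
          · have hjge : n + 1 ≤ j := by omega
            rw [if_neg (by omega), if_neg (by omega), if_neg (by omega)]
            by_cases hjn1 : j = n + 1
            · rw [if_pos ⟨hin, hjn1⟩, if_neg (by omega), if_neg (by omega),
                if_neg (by omega), if_pos ⟨hin, hjge⟩]
              have h1 : (0:ℝ) ≤ rho / (rho ^ k + 1) := by positivity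
              have h2 := silver_pos (j - n - 1)
              nlinarith [sq_nonneg rho]
            · rw [if_neg (by omega), if_neg (by omega), if_neg (by omega),
                if_neg (by omega), if_neg (by omega), if_pos ⟨hin, hjge⟩]
              have h1 : (0:ℝ) ≤ rho / (rho ^ k + 1) := by positivity
              have h2 := silver_pos (j - n - 1)
              nlinarith
        · -- i ≥ n+1
          have hige : n + 1 ≤ i := by omega
          by_cases hjltn : j < n
          · rw [if_neg (by omega), if_neg (by omega), if_neg (by omega),
              if_neg (by omega), if_neg (by omega), if_neg (by omega),
              if_neg (by omega), if_neg (by omega), if_neg (by omega),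
              if_neg (by omega)]
            linarith
          · by_cases hjn : j = n
            · rw [if_neg (by omega), if_neg (by omega), if_neg (by omega),
                if_neg (by omega)]
              by_cases hi2n : i = 2 * n
              · rw [if_pos ⟨hi2n, hjn⟩, if_neg (by omega), if_neg (by omega),
                  if_neg (by omega), if_neg (by omega), if_neg (by omega)]
                have : (0:ℝ) ≤ (rho - rho ^ (-(k + 1 : ℤ))) * (rho ^ k + 1) := by
                  apply mul_nonneg _ (by positivity)
                  linarith
                linarith
              · rw [if_neg (by omega), if_neg (by omega), if_neg (by omega),
                  if_neg (by omega), if_neg (by omega), if_neg (by omega)]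
                linarith
            · -- i ≥ n+1, j ≥ n+1
              have hjge : n + 1 ≤ j := by omega
              rw [if_neg (by omega), if_pos ⟨hige, hjge⟩, if_neg (by omega),
                if_neg (by omega), if_neg (by omega), if_neg (by omega),
                if_neg (by omega), if_neg (by omega), if_neg (by omega)]
              have hrec := ih (i - n - 1) (j - n - 1) (by omega) (by omega) (by omega)
              have hA : (0:ℝ) ≤ rho ^ 2 * mubar (k+1) (i - n - 1) (j - n - 1) := by
                apply mul_nonneg (by positivity) hrec
              by_cases hi2n : i = 2 * n
              · rw [if_pos ⟨hi2n, hjge⟩]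
                have h2 : silver (j - n - 1) ≤ csil (k+1) (j - n - 1) :=
                  csil_ge (k+1) (j - n - 1) (by omega)
                have h3 := silver_pos (j - n - 1)
                nlinarith
              · rw [if_neg (by omega)]
                linarith

/-- all multipliers μ^{(k)}_{i,j} with i ≠ j are nonnegative: the non-starred
entries μ̄^{(k)}_{i,j} (i ≠ j) and the starred row μ^{(k)}_{*,j} = c^{(k)}_j + 𝟙{j = 1}
(zero-based: c^{(k)}_j + 𝟙{j = 0}) are all ≥ 0. -/
theorem mu_nonneg (k : ℕ) (hk : 1 ≤ k) :
    (∀ i j, i < 2 ^ k - 1 → j < 2 ^ k - 1 → i ≠ j → 0 ≤ mubar k i j) ∧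
    (∀ j, j < 2 ^ k - 1 → 0 ≤ csil k j + (if j = 0 then 1 else 0)) := by
  constructor
  · exact fun i j hi hj hij => mubar_nonneg k i j hi hj hij
  · intro j hj
    have h1 : silver j ≤ csil k j := csil_ge k j hj
    have h2 := silver_pos j
    split_ifs <;> linarith
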